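/- arXiv:1308.2459 — 2 statements merged into one kernel-verified Lean document; each statement's English description precedes it below -/
import Mathlib

section
/- Let (X,d) be a metric space, R a finitely semi-recurrent, non-identical relation on X, and T : X → X an R-semi-progressive, R-increasing selfmap which is (d,R;G,φ)-contractive for some G ∈ 𝒢 and some Meir-Keeler admissible function φ ∈ F(re)(ℝ₊). If X is (a-o,d)-complete and R is (a-o,d)-almost-selfclosed, then T is a globally strong Picard operator (modulo (d,R)): for each x ∈ X(T,R) the sequence (Tⁿx) converges to a fixed point of T, and any two fixed points z₁, z₂ of T with z₁ R z₂ coincide. -/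
open Filter Topology

namespace Paper

variable {X : Type*} [MetricSpace X]

/-- `A₁(x,y) = d(x,y)`. -/
noncomputable def A1 (T : X → X) (x y : X) : ℝ := dist x y

/-- `A₂(x,y) = (1/2)[d(x,Tx) + d(y,Ty)]`. -/
noncomputable def A2 (T : X → X) (x y : X) : ℝ := (dist x (T x) + dist y (T y)) / 2

/-- `A₃(x,y) = max{d(x,Tx), d(y,Ty)}`. -/
noncomputable def A3 (T : X → X) (x y : X) : ℝ := max (dist x (T x)) (dist y (T y))

/-- `A₄(x,y) = (1/2)[d(x,Ty) + d(Tx,y)]`. -/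
noncomputable def A4 (T : X → X) (x y : X) : ℝ := (dist x (T y) + dist (T x) y) / 2

/-- `B₁(x,y) = diam{x, Tx, y, Ty}`. -/
noncomputable def B1 (T : X → X) (x y : X) : ℝ := Metric.diam ({x, T x, y, T y} : Set X)

noncomputable def B2 (T : X → X) (x y : X) : ℝ := max (A1 T x y) (A2 T x y)
noncomputable def B3 (T : X → X) (x y : X) : ℝ := max (A1 T x y) (A3 T x y)
noncomputable def B4 (T : X → X) (x y : X) : ℝ := max (A1 T x y) (A4 T x y)
noncomputable def C1 (T : X → X) (x y : X) : ℝ := max (A1 T x y) (max (A2 T x y) (A4 T x y))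
noncomputable def C2 (T : X → X) (x y : X) : ℝ := max (A1 T x y) (max (A3 T x y) (A4 T x y))

/-- The class `𝒢 = {A₁, B₂, B₃, B₄, C₁, C₂}`. -/
noncomputable def calG (T : X → X) : Set (X → X → ℝ) :=
  {A1 T, B2 T, B3 T, B4 T, C1 T, C2 T}

/-- The class `𝒢₁ = {A₁, B₂, B₄, C₁}`. -/
noncomputable def calG1 (T : X → X) : Set (X → X → ℝ) :=
  {A1 T, B2 T, B4 T, C1 T}

/-- `T` is strictly `(d,R;G)`-nonexpansive: `x R̃ y` implies `d(Tx,Ty) < G(x,y)`. -/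
def StrictlyNonexpansive (R : X → X → Prop) (T : X → X) (G : X → X → ℝ) : Prop :=
  ∀ x y, R x y → x ≠ y → dist (T x) (T y) < G x y

/-- `T` is Meir-Keeler `(d,R;G)`-contractive. -/
def MeirKeelerContractive (R : X → X → Prop) (T : X → X) (G : X → X → ℝ) : Prop :=
  StrictlyNonexpansive R T G ∧
  ∀ ε : ℝ, 0 < ε → ∃ δ : ℝ, 0 < δ ∧
    ∀ x y, R x y → x ≠ y → ε < G x y → G x y < ε + δ → dist (T x) (T y) ≤ ε

/-- `φ ∈ F(re)(ℝ₊)`: `φ : ℝ₊ → ℝ₊` with `φ(0) = 0` and `φ(t) < t` for `t > 0`. -/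
def Regressive (φ : ℝ → ℝ) : Prop :=
  φ 0 = 0 ∧ (∀ t, 0 ≤ t → 0 ≤ φ t) ∧ (∀ t, 0 < t → φ t < t)

/-- `φ` is Meir-Keeler admissible. -/
def MKAdmissible (φ : ℝ → ℝ) : Prop :=
  ∀ γ : ℝ, 0 < γ → ∃ β : ℝ, 0 < β ∧ β < γ ∧ ∀ t, γ ≤ t → t < γ + β → φ t ≤ γ

/-- `T` is `(d,R;G,φ)`-contractive. -/
def PhiContractive (R : X → X → Prop) (T : X → X) (G : X → X → ℝ) (φ : ℝ → ℝ) : Prop :=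
  ∀ x y, R x y → x ≠ y → dist (T x) (T y) ≤ φ (G x y)

/-- `(ψ,φ)` is a pair of weak generalized altering functions in `F(ℝ₊)`. -/
def WeakAlteringPair (ψ φ : ℝ → ℝ) : Prop :=
  (∀ s t, 0 ≤ s → s ≤ t → ψ s ≤ ψ t) ∧
  (∀ t, 0 ≤ t → 0 ≤ ψ t) ∧ (∀ t, 0 ≤ t → 0 ≤ φ t) ∧
  φ 0 = 0 ∧
  (∀ ε : ℝ, 0 < ε → ψ ε - Function.leftLim ψ ε < φ ε) ∧
  (∀ ε : ℝ, 0 < ε → ∀ t : ℕ → ℝ,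
    Tendsto t atTop (nhds ε) → (∀ᶠ n in atTop, ε < t n) →
    Function.rightLim ψ ε - ψ ε < Filter.limsup (fun n => φ (t n)) atTop)

/-- `T` is `(d,R;G,(ψ,φ))`-contractive. -/
def PsiPhiContractive (R : X → X → Prop) (T : X → X) (G : X → X → ℝ) (ψ φ : ℝ → ℝ) : Prop :=
  ∀ x y, R x y → x ≠ y → ψ (dist (T x) (T y)) ≤ ψ (G x y) - φ (G x y)

/-- `(z_n)` is `R`-ascending. -/
def Ascending (R : X → X → Prop) (z : ℕ → X) : Prop := ∀ n, R (z n) (z (n + 1))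

/-- `(z_n)` is `T`-orbital: a subsequence of `(Tⁿ x)` for some `x`. -/
def Orbital (T : X → X) (z : ℕ → X) : Prop :=
  ∃ x : X, ∃ i : ℕ → ℕ, Tendsto i atTop atTop ∧ ∀ n, z n = T^[i n] x

/-- `X` is `(a-o,d)`-complete. -/
def AOComplete (R : X → X → Prop) (T : X → X) : Prop :=
  ∀ z : ℕ → X, Ascending R z → Orbital T z → CauchySeq z → ∃ l, Tendsto z atTop (nhds l)

/-- `T` is `(a-o,d)`-continuous. -/
def AOContinuous (R : X → X → Prop) (T : X → X) : Prop :=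
  ∀ z : ℕ → X, ∀ l : X, Ascending R z → Orbital T z → Tendsto z atTop (nhds l) →
    Tendsto (fun n => T (z n)) atTop (nhds (T l))

/-- `R` is `(a-o,d)`-almost-selfclosed. -/
def AlmostSelfClosed (R : X → X → Prop) (T : X → X) : Prop :=
  ∀ z : ℕ → X, ∀ l : X, Ascending R z → Orbital T z → Tendsto z atTop (nhds l) →
    ∃ i : ℕ → ℕ, Tendsto i atTop atTop ∧ ∀ n, R (z (i n)) l

/-- the spectrum `spec(x) = {i ≥ 1 : x R Tⁱx}`. -/
def spec (R : X → X → Prop) (T : X → X) (x : X) : Set ℕ := {i | 1 ≤ i ∧ R x (T^[i] x)}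

/-- `R` is `k`-semi-recurrent at `x`. -/
def SemiRecurrentAt (R : X → X → Prop) (T : X → X) (x : X) (k : ℕ) : Prop :=
  ∀ n : ℕ, 1 ≤ n → ∃ q ∈ spec R T x, q ≤ n ∧ n < q + k

/-- `x` is orbital admissible. -/
def OrbAdmissible (T : X → X) (x : X) : Prop :=
  ∀ i j : ℕ, i ≠ j → T^[i] x ≠ T^[j] x

/-- `R` is finitely semi-recurrent. -/
def FinSemiRecurrent (R : X → X → Prop) (T : X → X) : Prop :=
  ∀ x : X, R x (T x) → OrbAdmissible T x → ∃ k : ℕ, 1 ≤ k ∧ SemiRecurrentAt R T x k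


section AuxLemmas

variable {X : Type*} [MetricSpace X]

lemma aux_calG_cases {T : X → X} {G : X → X → ℝ} (hG : G ∈ calG T) :
    G = A1 T ∨ G = B2 T ∨ G = B3 T ∨ G = B4 T ∨ G = C1 T ∨ G = C2 T := by
  simpa [calG] using hG

lemma aux_G_lower {T : X → X} {G : X → X → ℝ} (hG : G ∈ calG T) (x y : X) :
    dist x y ≤ G x y := by
  rcases aux_calG_cases hG with h|h|h|h|h|h <;> subst h <;>
    first
      | exact le_refl _
      | exact le_max_left _ _

lemma aux_G_upper {T : X → X} {G : X → X → ℝ} (hG : G ∈ calG T) (x y : X) :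
    G x y ≤ max (A1 T x y) (max (A2 T x y) (max (A3 T x y) (A4 T x y))) := by
  have h1 : A1 T x y ≤ max (A1 T x y) (max (A2 T x y) (max (A3 T x y) (A4 T x y))) :=
    le_max_left _ _
  have h2 : A2 T x y ≤ max (A1 T x y) (max (A2 T x y) (max (A3 T x y) (A4 T x y))) :=
    le_max_of_le_right (le_max_left _ _)
  have h3 : A3 T x y ≤ max (A1 T x y) (max (A2 T x y) (max (A3 T x y) (A4 T x y))) :=
    le_max_of_le_right (le_max_of_le_right (le_max_left _ _))
  have h4 : A4 T x y ≤ max (A1 T x y) (max (A2 T x y) (max (A3 T x y) (A4 T x y))) :=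
    le_max_of_le_right (le_max_of_le_right (le_max_right _ _))
  rcases aux_calG_cases hG with h|h|h|h|h|h <;> subst h
  · exact h1
  · exact max_le h1 h2
  · exact max_le h1 h3
  · exact max_le h1 h4
  · exact max_le h1 (max_le h2 h4)
  · exact max_le h1 (max_le h3 h4)

lemma aux_phi_le {φ : ℝ → ℝ} (hφ : Regressive φ) {t : ℝ} (ht : 0 ≤ t) : φ t ≤ t := by
  rcases eq_or_lt_of_le ht with h | h
  · rw [← h, hφ.1]
  · exact le_of_lt (hφ.2.2 t h)

lemma aux_mk {φ : ℝ → ℝ} (hφ : Regressive φ) (hadm : MKAdmissible φ) :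
    ∀ ε : ℝ, 0 < ε → ∃ β : ℝ, 0 < β ∧ β < ε ∧ ∀ t, 0 ≤ t → t < ε + β → φ t ≤ ε := by
  intro ε hε
  obtain ⟨β, hβ0, hβε, hβ⟩ := hadm ε hε
  refine ⟨β, hβ0, hβε, fun t ht htlt => ?_⟩
  rcases lt_or_ge t ε with h | h
  · rcases eq_or_lt_of_le ht with h0 | h0
    · rw [← h0, hφ.1]; exact le_of_lt hε
    · exact le_of_lt ((hφ.2.2 t h0).trans_le h.le)
  · exact hβ t h htlt

lemma aux_G_consec {T : X → X} {G : X → X → ℝ} (hG : G ∈ calG T) (y : X) :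
    G y (T y) ≤ max (dist y (T y)) (dist (T y) (T (T y))) := by
  have h := aux_G_upper hG y (T y)
  have ha := le_max_left (dist y (T y)) (dist (T y) (T (T y)))
  have hb := le_max_right (dist y (T y)) (dist (T y) (T (T y)))
  have htri := dist_triangle y (T y) (T (T y))
  refine h.trans (max_le ?_ (max_le ?_ (max_le ?_ ?_)))
  · exact ha
  · show (dist y (T y) + dist (T y) (T (T y))) / 2 ≤ _
    linarith
  · exact max_le ha hb
  · show (dist y (T (T y)) + dist (T y) (T y)) / 2 ≤ _
    rw [dist_self]
    linarith

lemma aux_G_crude {T : X → X} {G : X → X → ℝ} (hG : G ∈ calG T) (x y : X) :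
    G x y ≤ dist x y + dist x (T x) + dist y (T y) := by
  have h := aux_G_upper hG x y
  have n1 : (0:ℝ) ≤ dist x y := dist_nonneg
  have n2 : (0:ℝ) ≤ dist x (T x) := dist_nonneg
  have n3 : (0:ℝ) ≤ dist y (T y) := dist_nonneg
  have t1 : dist x (T y) ≤ dist x y + dist y (T y) := dist_triangle _ _ _
  have t2 : dist (T x) y ≤ dist (T x) x + dist x y := dist_triangle _ _ _
  have t3 : dist (T x) x = dist x (T x) := dist_comm _ _
  refine h.trans (max_le ?_ (max_le ?_ (max_le ?_ ?_)))
  · show dist x y ≤ _; linarith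
  · show (dist x (T x) + dist y (T y)) / 2 ≤ _; linarith
  · exact max_le (by linarith) (by linarith)
  · show (dist x (T y) + dist (T x) y) / 2 ≤ _; linarith

lemma aux_G_near {T : X → X} {G : X → X → ℝ} (hG : G ∈ calG T)
    {φ : ℝ → ℝ} (hφ : Regressive φ) (x l : X)
    (ha : dist x l ≤ dist l (T l) / 4) (hb : dist x (T x) ≤ dist l (T l) / 4) :
    φ (G x l) ≤ max (φ (dist l (T l))) (dist x l + dist x (T x) / 2 + dist l (T l) / 2) := by
  have hr0 : (0:ℝ) ≤ dist l (T l) := dist_nonneg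
  have ha0 : (0:ℝ) ≤ dist x l := dist_nonneg
  have hρ0 : (0:ℝ) ≤ dist x (T x) := dist_nonneg
  have t1 : dist x (T l) ≤ dist x l + dist l (T l) := dist_triangle _ _ _
  have t2 : dist (T x) l ≤ dist x (T x) + dist x l := by
    have h := dist_triangle (T x) x l
    have e : dist (T x) x = dist x (T x) := dist_comm _ _
    linarith
  have h1 : A1 T x l ≤ dist x l + dist x (T x)/2 + dist l (T l)/2 := by
    simp only [A1]; linarith
  have h2 : A2 T x l ≤ dist x l + dist x (T x)/2 + dist l (T l)/2 := by
    simp only [A2]; linarith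
  have h4 : A4 T x l ≤ dist x l + dist x (T x)/2 + dist l (T l)/2 := by
    simp only [A4]; linarith
  have h4r : A4 T x l ≤ dist l (T l) := by simp only [A4]; linarith
  have h1r : A1 T x l ≤ dist l (T l) := by simp only [A1]; linarith
  have h3 : A3 T x l = dist l (T l) := by
    simp only [A3]; exact max_eq_right (by linarith)
  have hA1nn : (0:ℝ) ≤ A1 T x l := by simp only [A1]; exact ha0
  have hphile : ∀ u : ℝ, 0 ≤ u → u ≤ dist x l + dist x (T x)/2 + dist l (T l)/2 →
      φ u ≤ max (φ (dist l (T l))) (dist x l + dist x (T x)/2 + dist l (T l)/2) :=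
    fun u hu hus => le_max_of_le_right ((aux_phi_le hφ hu).trans hus)
  rcases aux_calG_cases hG with h|h|h|h|h|h <;> subst h
  · exact hphile _ hA1nn h1
  · exact hphile _ (le_trans hA1nn (le_max_left _ _)) (max_le h1 h2)
  · have hB3 : B3 T x l = dist l (T l) := by
      simp only [B3, h3]; exact max_eq_right h1r
    rw [hB3]; exact le_max_left _ _
  · exact hphile _ (le_trans hA1nn (le_max_left _ _)) (max_le h1 h4)
  · exact hphile _ (le_trans hA1nn (le_max_left _ _)) (max_le h1 (max_le h2 h4))
  · have hC2 : C2 T x l = dist l (T l) := by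
      simp only [C2, h3]
      rw [max_eq_left h4r, max_eq_right h1r]
    rw [hC2]; exact le_max_left _ _

end AuxLemmas

/-- main theorem, alternative (iii): `T` `(d,R;G,φ)`-contractive for a
Meir-Keeler admissible `φ`, `X` `(a-o,d)`-complete, `R` `(a-o,d)`-almost-selfclosed. -/
theorem globally_strong_picard_phi_selfclosed {X : Type*} [MetricSpace X]
    (R : X → X → Prop) (T : X → X)
    (hni : ∃ x y : X, R x y ∧ x ≠ y)
    (hfsr : FinSemiRecurrent R T)
    (hsp : ∃ x : X, R x (T x))
    (hinc : ∀ x y : X, R x y → R (T x) (T y))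
    (hcomp : AOComplete R T)
    (G : X → X → ℝ) (hG : G ∈ calG T)
    (φ : ℝ → ℝ) (hφ : Regressive φ) (hadm : MKAdmissible φ)
    (hcontr : PhiContractive R T G φ)
    (hasc : AlmostSelfClosed R T) :
    (∀ x : X, R x (T x) →
      ∃ z : X, T z = z ∧ Tendsto (fun n => T^[n] x) atTop (nhds z)) ∧
    (∀ z₁ z₂ : X, T z₁ = z₁ → T z₂ = z₂ → R z₁ z₂ → z₁ = z₂) := by
  constructor
  · intro x hx
    set z : ℕ → X := fun n => T^[n] x with hzdef
    have hstep : ∀ n, T (z n) = z (n + 1) := by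
      intro n
      simp only [hzdef]
      exact (Function.iterate_succ_apply' T n x).symm
    have hascz : Ascending R z := by
      intro n
      induction n with
      | zero => simpa [hzdef] using hx
      | succ n ih =>
        have h := hinc _ _ ih
        rwa [hstep n, hstep (n + 1)] at h
    have horb : Orbital T z := ⟨x, id, tendsto_id, fun n => by simp [hzdef]⟩
    by_cases hfix : ∃ n, z (n + 1) = z n
    · obtain ⟨n, hn⟩ := hfix
      have hfx : T (z n) = z n := by rw [hstep n]; exact hn
      refine ⟨z n, hfx, ?_⟩
      have hconst : ∀ m, z (n + m) = z n := by
        intro m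
        induction m with
        | zero => rfl
        | succ m ih =>
          have : z (n + m + 1) = T (z (n + m)) := (hstep (n + m)).symm
          rw [show n + (m + 1) = n + m + 1 from rfl, this, ih, hfx]
      have hev : ∀ᶠ m in atTop, (fun _ => z n) m = z m := by
        filter_upwards [eventually_ge_atTop n] with m hm
        obtain ⟨p, rfl⟩ := Nat.exists_eq_add_of_le hm
        exact (hconst p).symm
      exact Tendsto.congr' hev tendsto_const_nhds
    · push_neg at hfix
      set ρ : ℕ → ℝ := fun n => dist (z n) (z (n + 1)) with hρdef
      have hρeq : ∀ m, ρ m = dist (z m) (z (m + 1)) := fun m => by simp only [hρdef]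
      have hρpos : ∀ n, 0 < ρ n := by
        intro n
        rw [hρeq n]
        exact dist_pos.mpr (hfix n).symm
      have hkey : ∀ n, ρ (n + 1) ≤ φ (ρ n) ∧ ρ (n + 1) < ρ n := by
        intro n
        have hR := hascz n
        have hne : z n ≠ z (n + 1) := (hfix n).symm
        have hc := hcontr (z n) (z (n + 1)) hR hne
        rw [hstep n, hstep (n + 1)] at hc
        -- hc : dist (z (n+1)) (z (n+2)) ≤ φ (G (z n) (z (n+1)))
        have hub : G (z n) (z (n + 1)) ≤ max (ρ n) (ρ (n + 1)) := by
          have h := aux_G_consec hG (z n)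
          rw [hstep n] at h
          rw [hstep (n + 1)] at h
          rw [hρeq n, hρeq (n + 1)]
          exact h
        have hlb : ρ n ≤ G (z n) (z (n + 1)) := by
          rw [hρeq n]; exact aux_G_lower hG _ _
        have hGpos : 0 < G (z n) (z (n + 1)) := lt_of_lt_of_le (hρpos n) hlb
        have hφG : φ (G (z n) (z (n + 1))) < G (z n) (z (n + 1)) := hφ.2.2 _ hGpos
        have hlt : ρ (n + 1) < max (ρ n) (ρ (n + 1)) := by
          rw [hρeq (n + 1)]
          exact lt_of_le_of_lt hc (lt_of_lt_of_le hφG hub)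
        have hdec : ρ (n + 1) < ρ n := by
          by_contra hcon
          push_neg at hcon
          rw [max_eq_right hcon] at hlt
          exact lt_irrefl _ hlt
        have hGeq : G (z n) (z (n + 1)) = ρ n :=
          le_antisymm (hub.trans_eq (max_eq_left hdec.le)) hlb
        refine ⟨?_, hdec⟩
        rw [← hGeq, hρeq (n + 1)]
        exact hc
      have hanti : StrictAnti ρ := strictAnti_nat_of_succ_lt fun n => (hkey n).2
      have hoadm : OrbAdmissible T x := by
        have key : ∀ i j : ℕ, i < j → T^[i] x ≠ T^[j] x := by
          intro i j hij heq
          have h1 : z i = z j := by simp only [hzdef]; exact heq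
          have h2 : ρ i = ρ j := by
            have hsucc : z (i + 1) = z (j + 1) := by
              rw [← hstep i, ← hstep j, h1]
            rw [hρeq i, hρeq j, h1, hsucc]
          exact absurd h2 (ne_of_gt (hanti hij))
        intro i j hij
        rcases hij.lt_or_gt with h | h
        · exact key i j h
        · exact (key j i h).symm
      obtain ⟨k, hk1, hkrec⟩ := hfsr x hx hoadm
      have hbdd : BddBelow (Set.range ρ) := ⟨0, by rintro r ⟨n, rfl⟩; exact (hρpos n).le⟩
      have htendinf : Tendsto ρ atTop (nhds (⨅ n, ρ n)) :=
        tendsto_atTop_ciInf hanti.antitone hbdd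
      have hge : ∀ m, (⨅ n, ρ n) ≤ ρ m := fun m => ciInf_le hbdd m
      have hinf0 : (⨅ n, ρ n) = 0 := by
        by_contra hL
        have hLpos : 0 < ⨅ n, ρ n :=
          lt_of_le_of_ne (le_ciInf fun n => (hρpos n).le) (Ne.symm hL)
        obtain ⟨β, hβ0, hβε, hβprop⟩ := hadm _ hLpos
        obtain ⟨n, hn⟩ := (htendinf.eventually_lt_const (by linarith :
          (⨅ n, ρ n) < (⨅ n, ρ n) + β)).exists
        have h1 : φ (ρ n) ≤ ⨅ n, ρ n := hβprop _ (hge n) hn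
        have h2 : ρ (n + 1) ≤ ⨅ n, ρ n := (hkey n).1.trans h1
        have h3 : ρ (n + 2) < ⨅ n, ρ n := lt_of_lt_of_le (hkey (n + 1)).2 h2
        exact absurd (hge (n + 2)) (not_le.mpr h3)
      have hρ0 : Tendsto ρ atTop (nhds 0) := hinf0 ▸ htendinf
      have hgapR : ∀ q ∈ spec R T x, ∀ n, R (z n) (z (n + q)) := by
        intro q hq n
        induction n with
        | zero =>
          have := hq.2
          simpa [hzdef] using this
        | succ n ih =>
          have h := hinc _ _ ih
          rw [hstep n, hstep (n + q)] at h
          have e : n + 1 + q = n + q + 1 := by omega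
          rw [e]
          exact h
      have hcauchy : CauchySeq z := by
        rw [Metric.cauchySeq_iff']
        intro ε hε
        have hε2 : 0 < ε / 2 := by positivity
        obtain ⟨β, hβ0, hβε, hβ⟩ := aux_mk hφ hadm (ε / 2) hε2
        set δ : ℝ := β / (2 * ((k : ℝ) + 1)) with hδdef
        have hδpos : 0 < δ := by rw [hδdef]; positivity
        have hk1' : (1 : ℝ) ≤ (k : ℝ) := by exact_mod_cast hk1
        have hδβ : δ * (2 * ((k : ℝ) + 1)) = β := by
          rw [hδdef]; field_simp
        obtain ⟨N, hN⟩ := (hρ0.eventually_lt_const hδpos).exists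
        have hρsmall : ∀ m, N ≤ m → ρ m < δ := by
          intro m hm
          exact lt_of_le_of_lt (hanti.antitone hm) hN
        have hchain : ∀ a m : ℕ, N ≤ a → dist (z a) (z (a + m)) ≤ (m : ℝ) * δ := by
          intro a m ha
          induction m with
          | zero => simp
          | succ m ih =>
            have htri : dist (z a) (z (a + m + 1)) ≤
                dist (z a) (z (a + m)) + dist (z (a + m)) (z (a + m + 1)) :=
              dist_triangle _ _ _
            have hst : dist (z (a + m)) (z (a + m + 1)) ≤ δ := by
              rw [← hρeq (a + m)]
              exact (hρsmall (a + m) (by omega)).le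
            have e : a + (m + 1) = a + m + 1 := by omega
            rw [e]
            push_cast
            calc dist (z a) (z (a + m + 1)) ≤ dist (z a) (z (a + m)) + δ := by linarith
            _ ≤ (m : ℝ) * δ + δ := by linarith
            _ = ((m : ℝ) + 1) * δ := by ring
        have claim : ∀ p n : ℕ, N ≤ n → dist (z n) (z (n + p)) ≤ ε / 2 + β / 2 := by
          intro p
          induction p using Nat.strong_induction_on with
          | _ p IH =>
            intro n hn
            rcases Nat.lt_or_ge p (k + 2) with hp | hp
            · -- short case
              have h1 := hchain n p hn
              have hpk : (p : ℝ) ≤ (k : ℝ) + 1 := by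
                have : p ≤ k + 1 := by omega
                exact_mod_cast this
              have h2 : (p : ℝ) * δ ≤ ((k : ℝ) + 1) * δ :=
                mul_le_mul_of_nonneg_right hpk hδpos.le
              have h3 : ((k : ℝ) + 1) * δ = β / 2 := by linarith [hδβ]
              linarith
            · -- long case
              obtain ⟨q, hqspec, hq1, hq2⟩ := hkrec (p - 1) (by omega)
              have hq0 : 1 ≤ q := hqspec.1
              have hRq : R (z n) (z (n + q)) := hgapR q hqspec n
              have hneq : z n ≠ z (n + q) := by
                intro h
                exact hoadm n (n + q) (by omega) (by simpa [hzdef] using h)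
              have hcq := hcontr _ _ hRq hneq
              rw [hstep n, hstep (n + q)] at hcq
              have hGub : G (z n) (z (n + q)) ≤
                  dist (z n) (z (n + q)) + ρ n + ρ (n + q) := by
                have h := aux_G_crude hG (z n) (z (n + q))
                rw [hstep n, hstep (n + q)] at h
                rw [hρeq n, hρeq (n + q)]
                exact h
              have hdq : dist (z n) (z (n + q)) ≤ ε / 2 + β / 2 := IH q (by omega) n hn
              have hρn : ρ n < δ := hρsmall n hn
              have hρnq : ρ (n + q) < δ := hρsmall (n + q) (by omega)
              have h4δ : 4 * δ ≤ β := by nlinarith [hδpos.le]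
              have hGlt : G (z n) (z (n + q)) < ε / 2 + β := by linarith
              have hGnn : 0 ≤ G (z n) (z (n + q)) :=
                dist_nonneg.trans (aux_G_lower hG _ _)
              have hmid : dist (z (n + 1)) (z (n + q + 1)) ≤ ε / 2 :=
                hcq.trans (hβ _ hGnn hGlt)
              -- tail
              have htail0 := hchain (n + q + 1) (p - q - 1) (by omega)
              have e : n + q + 1 + (p - q - 1) = n + p := by omega
              rw [e] at htail0
              have hmk : ((p - q - 1 : ℕ) : ℝ) ≤ (k : ℝ) - 1 := by
                have hmn : p - q - 1 + 1 ≤ k := by omega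
                have := (Nat.cast_le (α := ℝ)).mpr hmn
                push_cast at this
                linarith
              have htail : dist (z (n + q + 1)) (z (n + p)) ≤ ((k : ℝ) - 1) * δ :=
                htail0.trans (mul_le_mul_of_nonneg_right hmk hδpos.le)
              have hkδ : (k : ℝ) * δ ≤ β / 2 := by nlinarith [hδpos.le]
              have htri := dist_triangle4 (z n) (z (n + 1)) (z (n + q + 1)) (z (n + p))
              have hρn' : dist (z n) (z (n + 1)) < δ := by rw [← hρeq n]; exact hρn
              calc dist (z n) (z (n + p)) ≤
                  dist (z n) (z (n + 1)) + dist (z (n + 1)) (z (n + q + 1)) +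
                    dist (z (n + q + 1)) (z (n + p)) := htri
                _ ≤ ε / 2 + β / 2 := by linarith
        refine ⟨N, fun n hn => ?_⟩
        obtain ⟨p, rfl⟩ := Nat.exists_eq_add_of_le hn
        rw [dist_comm]
        have := claim p N le_rfl
        linarith
      obtain ⟨l, hl⟩ := hcomp z hascz horb hcauchy
      obtain ⟨i, hi, hiR⟩ := hasc z l hascz horb hl
      have hTl : T l = l := by
        by_contra hTl
        have hr : 0 < dist l (T l) := dist_pos.mpr (Ne.symm hTl)
        have hφr : φ (dist l (T l)) < dist l (T l) := hφ.2.2 _ hr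
        set c : ℝ := max (φ (dist l (T l))) (dist l (T l) / 2) with hcdef
        have hφrc : φ (dist l (T l)) ≤ c := le_max_left _ _
        have hrc : dist l (T l) / 2 ≤ c := le_max_right _ _
        have hc : c < dist l (T l) := by
          rw [hcdef]
          exact max_lt hφr (by linarith)
        set η : ℝ := min (dist l (T l) / 4) ((dist l (T l) - c) / 4) with hηdef
        have hηpos : 0 < η := lt_min (by linarith) (by linarith)
        have hη1 : η ≤ dist l (T l) / 4 := min_le_left _ _
        have hη2 : η ≤ (dist l (T l) - c) / 4 := min_le_right _ _
        have hzl : Tendsto (fun n => z (i n)) atTop (nhds l) := hl.comp hi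
        have h1 : ∀ᶠ n in atTop, dist (z (i n)) l < η := by
          obtain ⟨N, hN⟩ := Metric.tendsto_atTop.mp hzl η hηpos
          exact eventually_atTop.mpr ⟨N, fun n hn => hN n hn⟩
        have h2 : ∀ᶠ n in atTop, ρ (i n) < η := (hρ0.comp hi).eventually_lt_const hηpos
        have h3 : ∀ᶠ n in atTop, z (i n) ≠ l := by
          by_cases hex : ∃ j, z j = l
          · obtain ⟨j, hj⟩ := hex
            filter_upwards [hi.eventually_gt_atTop j] with n hn heq
            exact hoadm (i n) j (by omega) (by simpa [hzdef] using heq.trans hj.symm)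
          · push_neg at hex
            exact Eventually.of_forall fun n => hex (i n)
        obtain ⟨n, hna, hnb, hnc'⟩ := (h1.and (h2.and h3)).exists
        have hdx : dist (z (i n)) (T (z (i n))) = ρ (i n) := by
          rw [hstep (i n), hρeq (i n)]
        have hcn := hcontr (z (i n)) l (hiR n) hnc'
        have hnear := aux_G_near hG hφ (z (i n)) l
          (by linarith) (by rw [hdx]; linarith)
        have htri1 : dist l (T (z (i n))) ≤ dist (z (i n)) l + ρ (i n) := by
          have := dist_triangle l (z (i n)) (T (z (i n)))
          have e := dist_comm l (z (i n))
          rw [hdx] at this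
          linarith
        have htri2 : dist l (T l) ≤ dist l (T (z (i n))) + dist (T (z (i n))) (T l) :=
          dist_triangle _ _ _
        have hρnn : 0 ≤ ρ (i n) := (hρpos (i n)).le
        have hann : 0 ≤ dist (z (i n)) l := dist_nonneg
        have hmax : max (φ (dist l (T l)))
            (dist (z (i n)) l + dist (z (i n)) (T (z (i n))) / 2 + dist l (T l) / 2) ≤
            c + dist (z (i n)) l + ρ (i n) / 2 := by
          refine max_le (by linarith) ?_
          rw [hdx]
          linarith
        have hfin : dist (T (z (i n))) (T l) ≤ c + dist (z (i n)) l + ρ (i n) / 2 :=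
          hcn.trans (hnear.trans hmax)
        linarith
      exact ⟨l, hTl, hl⟩
  · intro z₁ z₂ h1 h2 hR
    by_contra hne
    have hd : 0 < dist z₁ z₂ := dist_pos.mpr hne
    have hc := hcontr z₁ z₂ hR hne
    rw [h1, h2] at hc
    have hlow : dist z₁ z₂ ≤ G z₁ z₂ := aux_G_lower hG z₁ z₂
    have hub := aux_G_upper hG z₁ z₂
    have hA2 : A2 T z₁ z₂ = 0 := by simp [A2, h1, h2]
    have hA3 : A3 T z₁ z₂ = 0 := by simp [A3, h1, h2]
    have hA4 : A4 T z₁ z₂ = dist z₁ z₂ := by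
      simp [A4, h1, h2, add_self_div_two]
    rw [hA2, hA3, hA4] at hub
    have hGle : G z₁ z₂ ≤ dist z₁ z₂ := by
      refine hub.trans (max_le ?_ (max_le hd.le (max_le hd.le le_rfl)))
      simp only [A1]
      exact le_rfl
    have hGpos : 0 < G z₁ z₂ := hd.trans_le hlow
    have hφG : φ (G z₁ z₂) < G z₁ z₂ := hφ.2.2 _ hGpos
    linarith

end Paper
end

section
/- Let (X,d) be a metric space, R a finitely semi-recurrent, non-identical relation on X, and T : X → X an R-semi-progressive, R-increasing selfmap which is (d,R;G,(ψ,φ))-contractive for some G ∈ 𝒢 and some pair (ψ,φ) of weak generalized altering functions in F(ℝ₊). If X is (a-o,d)-complete and R is (a-o,d)-almost-selfclosed, then T is a globally strong Picard operator (modulo (d,R)): for each x ∈ X(T,R) the sequence (Tⁿx) converges to a fixed point of T, and any two fixed points z₁, z₂ of T with z₁ R z₂ coincide. -/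
open Filter Topology

namespace Paper

variable {X : Type*} [MetricSpace X]

/-!
The `(ψ,φ)`-contraction is Meir-Keeler: if it failed at level `ε`, there would be pairs with
`G(xₙ,yₙ) ↓ ε` and `d(Txₙ,Tyₙ) > ε`, forcing `φ(G(xₙ,yₙ)) → 0` against the right-limit
condition on `(ψ,φ)`. Along the orbit of `x R Tx` the step lengths then decrease to `0`, and
finite semi-recurrence (`T^[m] x R T^[m+q] x` for `q ∈ spec(x)`, with gaps `< k` in the
spectrum) lets the Meir-Keeler condition bound `d(T^[m] x, T^[m+p] x)` uniformly in `p`, so the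
orbit is Cauchy.
Almost-selfclosedness yields a subsequence related to the limit `l`, and passing to the limit
in the contraction gives `Tl = l`: by strict nonexpansiveness alone when `G ≤ C₁`, and by the
left-limit condition on `(ψ,φ)` when `G ≥ A₃`. Fixed points `z₁ R z₂` are equal because
`G(z₁,z₂) ≤ d(z₁,z₂)`.
-/

open Function

section MonotoneOnIci

variable {ψ : ℝ → ℝ} {ε : ℝ}

/- `ψ` is only monotone on `[0, ∞)`; near a point `ε > 0` it agrees with the monotone
function `t ↦ ψ (max t 0)`, to which the one-sided limit theory applies. -/
theorem _root_.MonotoneOn.tendsto_leftLim_of_pos (hψ : MonotoneOn ψ (Set.Ici 0)) (hε : 0 < ε) :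
    Tendsto ψ (𝓝[<] ε) (𝓝 (leftLim ψ ε)) := by
  have hmono : Monotone fun t => ψ (max t 0) := fun s t hst =>
    hψ (le_max_right s 0) (le_max_right t 0) (max_le_max_right 0 hst)
  have heq : (fun t => ψ (max t 0)) =ᶠ[𝓝[<] ε] ψ := by
    filter_upwards [nhdsWithin_le_nhds (eventually_gt_nhds hε)] with t ht
    rw [max_eq_left ht.le]
  have h := (hmono.tendsto_leftLim ε).congr' heq
  rwa [leftLim_eq_of_tendsto h]

theorem _root_.MonotoneOn.tendsto_rightLim_of_pos (hψ : MonotoneOn ψ (Set.Ici 0)) (hε : 0 < ε) :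
    Tendsto ψ (𝓝[>] ε) (𝓝 (rightLim ψ ε)) := by
  have hmono : Monotone fun t => ψ (max t 0) := fun s t hst =>
    hψ (le_max_right s 0) (le_max_right t 0) (max_le_max_right 0 hst)
  have heq : (fun t => ψ (max t 0)) =ᶠ[𝓝[>] ε] ψ := by
    filter_upwards [nhdsWithin_le_nhds (eventually_gt_nhds hε)] with t ht
    rw [max_eq_left ht.le]
  have h := (hmono.tendsto_rightLim ε).congr' heq
  rwa [rightLim_eq_of_tendsto h]

theorem _root_.MonotoneOn.leftLim_le_of_pos (hψ : MonotoneOn ψ (Set.Ici 0)) (hε : 0 < ε) :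
    leftLim ψ ε ≤ ψ ε :=
  le_of_tendsto (hψ.tendsto_leftLim_of_pos hε) <| by
    filter_upwards [Ioo_mem_nhdsLT hε] with t ht
    exact hψ ht.1.le hε.le ht.2.le

theorem _root_.MonotoneOn.le_rightLim_of_pos (hψ : MonotoneOn ψ (Set.Ici 0)) (hε : 0 < ε) :
    ψ ε ≤ rightLim ψ ε :=
  ge_of_tendsto (hψ.tendsto_rightLim_of_pos hε) <| by
    filter_upwards [self_mem_nhdsWithin] with t ht
    exact hψ hε.le (hε.trans ht).le (le_of_lt ht)

theorem _root_.MonotoneOn.rightLim_le_of_pos (hψ : MonotoneOn ψ (Set.Ici 0)) (hε : 0 < ε) {t : ℝ}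
    (ht : ε < t) : rightLim ψ ε ≤ ψ t :=
  le_of_tendsto (hψ.tendsto_rightLim_of_pos hε) <| by
    filter_upwards [Ioo_mem_nhdsGT ht] with s hs
    exact hψ (hε.trans hs.1).le (hε.trans ht).le hs.2.le

end MonotoneOnIci

namespace WeakAlteringPair

variable {ψ φ : ℝ → ℝ}

theorem monotoneOn (hpair : WeakAlteringPair ψ φ) : MonotoneOn ψ (Set.Ici 0) :=
  fun s hs t _ hst => hpair.1 s t hs hst

theorem pos (hpair : WeakAlteringPair ψ φ) {ε : ℝ} (hε : 0 < ε) : 0 < φ ε := by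
  have hψ := hpair.monotoneOn
  obtain ⟨-, -, -, -, hjump, -⟩ := hpair
  linarith [hjump ε hε, hψ.leftLim_le_of_pos hε]

end WeakAlteringPair

section ClassG

theorem A2_le_A3 (T : X → X) (x y : X) : A2 T x y ≤ A3 T x y := by
  simp only [A2, A3]
  linarith [le_max_left (dist x (T x)) (dist y (T y)), le_max_right (dist x (T x)) (dist y (T y))]

theorem C2_self_apply_le (T : X → X) (y : X) :
    C2 T y (T y) ≤ max (dist y (T y)) (dist (T y) (T (T y))) := by
  have hA4 : A4 T y (T y) ≤ (dist y (T y) + dist (T y) (T (T y))) / 2 := by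
    simp only [A4, dist_self, add_zero]
    linarith [dist_triangle y (T y) (T (T y))]
  refine max_le (le_max_left _ _) (max_le le_rfl (hA4.trans ?_))
  linarith [le_max_left (dist y (T y)) (dist (T y) (T (T y))),
    le_max_right (dist y (T y)) (dist (T y) (T (T y)))]

variable {T : X → X} {G : X → X → ℝ}

theorem dist_le_of_mem_calG (hG : G ∈ calG T) (x y : X) : dist x y ≤ G x y := by
  simp only [calG, Set.mem_insert_iff, Set.mem_singleton_iff] at hG
  rcases hG with rfl | rfl | rfl | rfl | rfl | rfl
  exacts [le_rfl, le_max_left _ _, le_max_left _ _, le_max_left _ _, le_max_left _ _,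
    le_max_left _ _]

theorem le_C2_of_mem_calG (hG : G ∈ calG T) (x y : X) : G x y ≤ C2 T x y := by
  simp only [calG, Set.mem_insert_iff, Set.mem_singleton_iff] at hG
  rcases hG with rfl | rfl | rfl | rfl | rfl | rfl
  · exact le_max_left _ _
  · exact max_le_max le_rfl ((A2_le_A3 T x y).trans (le_max_left _ _))
  · exact max_le_max le_rfl (le_max_left _ _)
  · exact max_le_max le_rfl (le_max_right _ _)
  · exact max_le_max le_rfl (max_le_max (A2_le_A3 T x y) le_rfl)
  · exact le_rfl

theorem le_C1_or_A3_le_of_mem_calG (hG : G ∈ calG T) :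
    (∀ x y, G x y ≤ C1 T x y) ∨ (∀ x y, A3 T x y ≤ G x y) := by
  simp only [calG, Set.mem_insert_iff, Set.mem_singleton_iff] at hG
  rcases hG with rfl | rfl | rfl | rfl | rfl | rfl
  · exact Or.inl fun x y => le_max_left _ _
  · exact Or.inl fun x y => max_le_max le_rfl (le_max_left _ _)
  · exact Or.inr fun x y => le_max_right _ _
  · exact Or.inl fun x y => max_le_max le_rfl (le_max_right _ _)
  · exact Or.inl fun x y => le_rfl
  · exact Or.inr fun x y => (le_max_left _ _).trans (le_max_right _ _)

theorem C2_lt_dist_add {B : ℝ} {y z : X} (hy : dist y (T y) < B) (hz : dist z (T z) < B) :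
    C2 T y z < dist y z + B := by
  have hD : 0 ≤ dist y z := dist_nonneg
  simp only [C2, A1, A3, A4, max_lt_iff]
  refine ⟨?_, ⟨?_, ?_⟩, ?_⟩ <;>
    linarith [dist_nonneg.trans_lt hy, dist_triangle y z (T z), dist_triangle_left (T y) z y]

theorem C2_eq_dist_of_fixed {z₁ z₂ : X} (h₁ : T z₁ = z₁) (h₂ : T z₂ = z₂) :
    C2 T z₁ z₂ = dist z₁ z₂ := by
  simp only [C2, A1, A3, A4, h₁, h₂, dist_self, max_self, add_self_div_two]
  exact max_eq_left (max_le dist_nonneg le_rfl)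

end ClassG

section Contractive

variable {R : X → X → Prop} {T : X → X} {G : X → X → ℝ} {ψ φ : ℝ → ℝ}

theorem PsiPhiContractive.strictlyNonexpansive (hcontr : PsiPhiContractive R T G ψ φ)
    (hpair : WeakAlteringPair ψ φ) (hG : ∀ x y, dist x y ≤ G x y) :
    StrictlyNonexpansive R T G := by
  intro x y hR hne
  have hGpos : 0 < G x y := (dist_pos.2 hne).trans_le (hG x y)
  have hψ : ψ (dist (T x) (T y)) < ψ (G x y) := by
    linarith [hcontr x y hR hne, hpair.pos hGpos]
  by_contra! hle
  exact hψ.not_ge (hpair.monotoneOn hGpos.le (hGpos.le.trans hle) hle)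

theorem PsiPhiContractive.meirKeelerContractive (hcontr : PsiPhiContractive R T G ψ φ)
    (hpair : WeakAlteringPair ψ φ) (hG : ∀ x y, dist x y ≤ G x y) :
    MeirKeelerContractive R T G := by
  refine ⟨hcontr.strictlyNonexpansive hpair hG, fun ε hε => ?_⟩
  have hψ := hpair.monotoneOn
  obtain ⟨-, -, hφ, -, -, hright⟩ := hpair
  by_contra! h
  choose u v hR hne hgt hlt hdist using fun n : ℕ => h (1 / (n + 1 : ℝ)) Nat.one_div_pos_of_nat
  set t : ℕ → ℝ := fun n => G (u n) (v n)
  have ht : Tendsto t atTop (𝓝 ε) := by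
    have hub : Tendsto (fun n : ℕ => ε + 1 / (n + 1 : ℝ)) atTop (𝓝 ε) := by
      simpa using (tendsto_const_nhds (x := ε)).add tendsto_one_div_add_atTop_nhds_zero_nat
    exact tendsto_of_tendsto_of_tendsto_of_le_of_le tendsto_const_nhds hub
      (fun n => (hgt n).le) (fun n => (hlt n).le)
  have hψt : Tendsto (fun n => ψ (t n)) atTop (𝓝 (rightLim ψ ε)) :=
    (hψ.tendsto_rightLim_of_pos hε).comp
      (tendsto_nhdsWithin_iff.2 ⟨ht, Eventually.of_forall hgt⟩)
  have hgap : Tendsto (fun n => ψ (t n) - rightLim ψ ε) atTop (𝓝 0) := by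
    simpa using hψt.sub_const (rightLim ψ ε)
  have hφt : Tendsto (fun n => φ (t n)) atTop (𝓝 0) := by
    refine squeeze_zero (fun n => hφ _ (hε.trans (hgt n)).le) (fun n => ?_) hgap
    linarith [hcontr _ _ (hR n) (hne n), hψ.rightLim_le_of_pos hε (hdist n)]
  have hjump := hright ε hε t ht (Eventually.of_forall hgt)
  rw [hφt.limsup_eq] at hjump
  linarith [hψ.le_rightLim_of_pos hε]

theorem MeirKeelerContractive.exists_pos_forall_dist_le (hMK : MeirKeelerContractive R T G)
    {ε : ℝ} (hε : 0 < ε) :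
    ∃ δ > 0, ∀ x y, R x y → x ≠ y → G x y < ε + δ → dist (T x) (T y) ≤ ε := by
  obtain ⟨δ, hδ, h⟩ := hMK.2 ε hε
  refine ⟨δ, hδ, fun x y hR hne hlt => ?_⟩
  rcases le_or_gt (G x y) ε with hle | hgt
  · exact (hMK.1 x y hR hne).le.trans hle
  · exact h x y hR hne hgt hlt

theorem StrictlyNonexpansive.eq_of_fixed (hT : StrictlyNonexpansive R T G)
    (hG : ∀ x y, G x y ≤ C2 T x y) {z₁ z₂ : X} (h₁ : T z₁ = z₁) (h₂ : T z₂ = z₂)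
    (hR : R z₁ z₂) : z₁ = z₂ := by
  by_contra hne
  have h := (hT z₁ z₂ hR hne).trans_le ((hG z₁ z₂).trans (C2_eq_dist_of_fixed h₁ h₂).le)
  rw [h₁, h₂] at h
  exact h.false

theorem StrictlyNonexpansive.dist_apply_apply_lt (hT : StrictlyNonexpansive R T G)
    (hG : ∀ x y, G x y ≤ C2 T x y) {y : X} (hR : R y (T y)) (hne : y ≠ T y) :
    dist (T y) (T (T y)) < dist y (T y) := by
  have h := (hT y (T y) hR hne).trans_le ((hG y (T y)).trans (C2_self_apply_le T y))
  by_contra! hle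
  rw [max_eq_right hle] at h
  exact h.false

end Contractive

theorem dist_le_mul_of_forall_dist_succ_le {α : Type*} [PseudoMetricSpace α] {f : ℕ → α} {m : ℕ} {B : ℝ}
    (h : ∀ n, m ≤ n → dist (f n) (f (n + 1)) ≤ B) (j : ℕ) :
    dist (f m) (f (m + j)) ≤ j * B :=
  calc dist (f m) (f (m + j)) ≤ ∑ _ ∈ Finset.Ico m (m + j), B :=
        dist_le_Ico_sum_of_dist_le (Nat.le_add_right m j) fun hn _ => h _ hn
    _ = j * B := by simp

theorem rel_iterate {α : Type*} {R : α → α → Prop} {T : α → α}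
    (hinc : ∀ x y, R x y → R (T x) (T y)) {y z : α} (h : R y z) (n : ℕ) :
    R (T^[n] y) (T^[n] z) := by
  induction n with
  | zero => exact h
  | succ n ih => simpa only [iterate_succ_apply'] using hinc _ _ ih

theorem ascending_iterate {α : Type*} {R : α → α → Prop} {T : α → α}
    (hinc : ∀ x y, R x y → R (T x) (T y)) {x : α} (hx : R x (T x)) :
    Ascending R fun n => T^[n] x := fun n => by
  simpa only [iterate_succ_apply] using rel_iterate hinc hx n

theorem orbital_iterate {α : Type*} (T : α → α) (x : α) : Orbital T fun n => T^[n] x :=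
  ⟨x, id, tendsto_id, fun _ => rfl⟩

section Orbit

variable {R : X → X → Prop} {T : X → X} {G : X → X → ℝ} {x : X}

theorem orbAdmissible_of_strictAnti (h : StrictAnti fun n => dist (T^[n] x) (T^[n + 1] x)) :
    OrbAdmissible T x := by
  intro i j hij heq
  refine hij (h.injective ?_)
  simp only [iterate_succ_apply', heq]

theorem StrictlyNonexpansive.strictAnti_dist_iterate (hT : StrictlyNonexpansive R T G)
    (hG : ∀ x y, G x y ≤ C2 T x y) (hinc : ∀ x y, R x y → R (T x) (T y)) (hx : R x (T x))
    (hne : ∀ n, T^[n] x ≠ T^[n + 1] x) :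
    StrictAnti fun n => dist (T^[n] x) (T^[n + 1] x) := by
  refine strictAnti_nat_of_succ_lt fun n => ?_
  have hR := ascending_iterate hinc hx n
  have hne := hne n
  simp only [iterate_succ_apply'] at hR hne ⊢
  exact hT.dist_apply_apply_lt hG hR hne

/- The distances `rₙ = d(T^[n] x, T^[n+1] x)` decrease to some `L`; if `L > 0`, the Meir-Keeler
condition at `L` gives `rₙ₊₁ ≤ L` as soon as `rₙ < L + δ`, while `rₙ₊₁ > rₙ₊₂ ≥ L`. -/
theorem MeirKeelerContractive.tendsto_dist_iterate (hMK : MeirKeelerContractive R T G)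
    (hG : ∀ x y, G x y ≤ C2 T x y) (hinc : ∀ x y, R x y → R (T x) (T y)) (hx : R x (T x))
    (hne : ∀ n, T^[n] x ≠ T^[n + 1] x) :
    Tendsto (fun n => dist (T^[n] x) (T^[n + 1] x)) atTop (𝓝 0) := by
  set r : ℕ → ℝ := fun n => dist (T^[n] x) (T^[n + 1] x) with hr
  have hanti : StrictAnti r := hMK.1.strictAnti_dist_iterate hG hinc hx hne
  have hbdd : BddBelow (Set.range r) := ⟨0, by rintro _ ⟨n, rfl⟩; exact dist_nonneg⟩
  have hlim := tendsto_atTop_ciInf hanti.antitone hbdd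
  set L := ⨅ n, r n
  rcases (le_ciInf fun n => dist_nonneg : 0 ≤ L).eq_or_lt with hL | hL
  · rw [hL]; exact hlim
  obtain ⟨δ, hδ, hMKδ⟩ := hMK.exists_pos_forall_dist_le hL
  obtain ⟨n, hn⟩ := (hlim.eventually_lt_const (lt_add_of_pos_right L hδ)).exists
  have hdec : r (n + 1) < r n := hanti n.lt_succ_self
  have hle : r (n + 1) ≤ L := by
    have hR := ascending_iterate hinc hx n
    have hne := hne n
    simp only [hr, iterate_succ_apply'] at hn hdec hR hne ⊢
    exact hMKδ _ _ hR hne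
      (((hG _ _).trans (C2_self_apply_le T _)).trans_lt (max_lt hn (hdec.trans hn)))
  have hgt : L < r (n + 1) := (ciInf_le hbdd (n + 2)).trans_lt (hanti (n + 1).lt_succ_self)
  exact absurd hle hgt.not_ge

/- Given `q ∈ spec(x)` with `q < p ≤ q + k`, split `d(T^[m] x, T^[m+p] x)` at `T^[m+1] x` and
`T^[m+q+1] x`: the middle term is at most `η` because `T^[m] x R T^[m+q] x`, and the two outer
terms consist of at most `k` steps of length `< B`. -/
theorem dist_iterate_add_le {η δ B : ℝ} {m k : ℕ}
    (hMK : ∀ y z, R y z → y ≠ z → G y z < η + δ → dist (T y) (T z) ≤ η)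
    (hG : ∀ x y, G x y ≤ C2 T x y) (hinc : ∀ x y, R x y → R (T x) (T y))
    (hadm : OrbAdmissible T x) (hk1 : 1 ≤ k) (hk : SemiRecurrentAt R T x k) (hη : 0 ≤ η)
    (hB : ∀ n, m ≤ n → dist (T^[n] x) (T^[n + 1] x) < B) (hkB : (k + 1) * B ≤ δ) (p : ℕ) :
    dist (T^[m] x) (T^[m + p] x) ≤ η + k * B := by
  have hB' : ∀ n, m ≤ n → dist (T^[n] x) (T (T^[n] x)) < B := fun n hn => by
    simpa only [iterate_succ_apply'] using hB n hn
  have hB0 : 0 < B := dist_nonneg.trans_lt (hB m le_rfl)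
  have hk1' : (1 : ℝ) ≤ k := by exact_mod_cast hk1
  induction p using Nat.strong_induction_on with
  | _ p ih =>
  rcases Nat.lt_or_ge p 2 with hp | hp
  · interval_cases p
    · simp only [add_zero, dist_self]; positivity
    · nlinarith [hB m le_rfl]
  obtain ⟨q, ⟨hq1, hxq⟩, hqp, hpq⟩ := hk (p - 1) (by omega)
  obtain ⟨j, rfl⟩ : ∃ j, p = q + 1 + j := ⟨p - (q + 1), by omega⟩
  have hR : R (T^[m] x) (T^[m + q] x) := by
    simpa only [← iterate_add_apply] using rel_iterate hinc hxq m
  have hne : T^[m] x ≠ T^[m + q] x := hadm _ _ (by omega)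
  have hGlt : G (T^[m] x) (T^[m + q] x) < η + δ :=
    calc G (T^[m] x) (T^[m + q] x) ≤ C2 T (T^[m] x) (T^[m + q] x) := hG _ _
      _ < dist (T^[m] x) (T^[m + q] x) + B := C2_lt_dist_add (hB' m le_rfl) (hB' _ (by omega))
      _ ≤ η + δ := by linarith [ih q (by omega)]
  have hmid : dist (T^[m + 1] x) (T^[m + q + 1] x) ≤ η := by
    simpa only [iterate_succ_apply'] using hMK _ _ hR hne hGlt
  have htail := dist_le_mul_of_forall_dist_succ_le (m := m + q + 1)
    (fun n hn => (hB n (by omega)).le) j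
  have hj : (j : ℝ) + 1 ≤ k := by exact_mod_cast (by omega : j + 1 ≤ k)
  calc dist (T^[m] x) (T^[m + (q + 1 + j)] x)
      ≤ dist (T^[m] x) (T^[m + 1] x) + dist (T^[m + 1] x) (T^[m + q + 1] x)
        + dist (T^[m + q + 1] x) (T^[m + q + 1 + j] x) := by
        rw [← add_assoc, ← add_assoc]; exact dist_triangle4 _ _ _ _
    _ ≤ B + η + j * B := by linarith [hB m le_rfl]
    _ ≤ η + k * B := by nlinarith

theorem MeirKeelerContractive.cauchySeq_iterate (hMK : MeirKeelerContractive R T G)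
    (hG : ∀ x y, G x y ≤ C2 T x y) (hinc : ∀ x y, R x y → R (T x) (T y))
    (hadm : OrbAdmissible T x) {k : ℕ} (hk1 : 1 ≤ k) (hk : SemiRecurrentAt R T x k)
    (hr : Tendsto (fun n => dist (T^[n] x) (T^[n + 1] x)) atTop (𝓝 0)) :
    CauchySeq fun n => T^[n] x := by
  rw [Metric.cauchySeq_iff']
  intro ε hε
  obtain ⟨δ, hδ, hMKδ⟩ := hMK.exists_pos_forall_dist_le (half_pos hε)
  set B := min δ (ε / 2) / (k + 1)
  have hB : 0 < B := by positivity
  have hkB : (k + 1) * B = min δ (ε / 2) := mul_div_cancel₀ _ (by positivity)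
  obtain ⟨N, hN⟩ := eventually_atTop.1 (hr.eventually_lt_const hB)
  refine ⟨N, fun n hn => ?_⟩
  obtain ⟨p, rfl⟩ := Nat.exists_eq_add_of_le hn
  have hbound := dist_iterate_add_le hMKδ hG hinc hadm hk1 hk (half_pos hε).le hN
    (hkB.trans_le (min_le_left _ _)) p
  rw [dist_comm]
  linarith [min_le_right δ (ε / 2)]

theorem MeirKeelerContractive.exists_tendsto_iterate (hMK : MeirKeelerContractive R T G)
    (hG : ∀ x y, G x y ≤ C2 T x y) (hfsr : FinSemiRecurrent R T)
    (hinc : ∀ x y, R x y → R (T x) (T y)) (hcomp : AOComplete R T) (hx : R x (T x)) :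
    ∃ l, Tendsto (fun n => T^[n] x) atTop (𝓝 l) := by
  by_cases hfix : ∃ n, T^[n] x = T^[n + 1] x
  · obtain ⟨n, hn⟩ := hfix
    have hfixed : T (T^[n] x) = T^[n] x := (iterate_succ_apply' T n x).symm.trans hn.symm
    refine ⟨T^[n] x, tendsto_atTop_of_eventually_const (i₀ := n) fun m hm => ?_⟩
    obtain ⟨j, rfl⟩ := Nat.exists_eq_add_of_le hm
    rw [add_comm, iterate_add_apply, iterate_fixed hfixed]
  push Not at hfix
  have hadm := orbAdmissible_of_strictAnti (hMK.1.strictAnti_dist_iterate hG hinc hx hfix)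
  obtain ⟨k, hk1, hk⟩ := hfsr x hx hadm
  exact hcomp _ (ascending_iterate hinc hx) (orbital_iterate T x) <|
    hMK.cauchySeq_iterate hG hinc hadm hk1 hk (hMK.tendsto_dist_iterate hG hinc hx hfix)

end Orbit

section FixedPoint

variable {R : X → X → Prop} {T : X → X} {G : X → X → ℝ} {u : ℕ → X} {l : X}

/- Along `uₙ → l` with `Tuₙ → l`, the bound `d(Tuₙ, Tl) ≤ C₁(uₙ, l)` passes to the limit as
`d(l, Tl) ≤ d(l, Tl) / 2`. -/
theorem StrictlyNonexpansive.fixed_of_tendsto (hT : StrictlyNonexpansive R T G)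
    (hG : ∀ x y, G x y ≤ C1 T x y) (hu : Tendsto u atTop (𝓝 l))
    (hTu : Tendsto (fun n => T (u n)) atTop (𝓝 l)) (hR : ∀ n, R (u n) l) : T l = l := by
  have hbound : ∀ n, dist (T (u n)) (T l) ≤ C1 T (u n) l := fun n => by
    by_cases h : u n = l
    · rw [h, dist_self]
      exact dist_nonneg.trans (le_max_left _ _)
    · exact (hT _ _ (hR n) h).le.trans (hG _ _)
  have hC1 : Tendsto (fun n => C1 T (u n) l) atTop
      (𝓝 (max (dist l l) (max ((dist l l + dist l (T l)) / 2) ((dist l (T l) + dist l l) / 2)))) :=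
    (hu.dist tendsto_const_nhds).max <| (((hu.dist hTu).add tendsto_const_nhds).div_const 2).max
      (((hu.dist tendsto_const_nhds).add (hTu.dist tendsto_const_nhds)).div_const 2)
  have h := le_of_tendsto_of_tendsto' (hTu.dist tendsto_const_nhds) hC1 hbound
  rw [dist_self, zero_add, add_zero, max_self, max_eq_right (by positivity)] at h
  exact (dist_le_zero.1 (by linarith)).symm

/- For `G ≥ A₃`, eventually `G(uₙ, l) = d(l, Tl) =: ρ`, so the contraction gives
`ψ(s) ≤ ψ(ρ) - φ(ρ)` for every `s < ρ`, i.e. `ψ(ρ) - ψ(ρ - 0) ≥ φ(ρ)`. -/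
theorem PsiPhiContractive.fixed_of_tendsto {ψ φ : ℝ → ℝ}
    (hcontr : PsiPhiContractive R T G ψ φ) (hpair : WeakAlteringPair ψ φ)
    (hGle : ∀ x y, G x y ≤ C2 T x y) (hGge : ∀ x y, A3 T x y ≤ G x y)
    (hu : Tendsto u atTop (𝓝 l)) (hTu : Tendsto (fun n => T (u n)) atTop (𝓝 l))
    (hR : ∀ n, R (u n) l) : T l = l := by
  have hψ := hpair.monotoneOn
  obtain ⟨-, -, -, -, hleft, -⟩ := hpair
  by_contra hfix
  have hρ : 0 < dist l (T l) := dist_pos.2 (Ne.symm hfix)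
  set ρ := dist l (T l)
  have hself : Tendsto (fun n => dist (u n) (T (u n))) atTop (𝓝 0) := by
    simpa using hu.dist hTu
  have hdist : Tendsto (fun n => dist (u n) l) atTop (𝓝 0) := by
    simpa using hu.dist (tendsto_const_nhds (x := l))
  have hA4 : Tendsto (fun n => A4 T (u n) l) atTop (𝓝 (ρ / 2)) := by
    simpa [A4] using ((hu.dist (tendsto_const_nhds (x := T l))).add
      (hTu.dist (tendsto_const_nhds (x := l)))).div_const 2
  have hTT : Tendsto (fun n => dist (T (u n)) (T l)) atTop (𝓝 ρ) :=
    hTu.dist tendsto_const_nhds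
  have hbelow : ∀ s, 0 < s → s < ρ → ψ s ≤ ψ ρ - φ ρ := by
    intro s hs hsρ
    obtain ⟨n, h1, h2, h3, h4⟩ := ((hself.eventually_lt_const hρ).and <|
      (hdist.eventually_lt_const hρ).and <| (hA4.eventually_lt_const (half_lt_self hρ)).and
        (hTT.eventually_const_lt hsρ)).exists
    have hne : u n ≠ l := fun h => by rw [h] at h1; exact h1.false
    have hGρ : G (u n) l = ρ :=
      le_antisymm ((hGle _ _).trans (max_le h2.le (max_le (max_le h1.le le_rfl) h3.le)))
        ((le_max_right _ _).trans (hGge _ _))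
    have hc := hcontr _ _ (hR n) hne
    rw [hGρ] at hc
    exact (hψ hs.le (hs.trans h4).le h4.le).trans hc
  have hjump : leftLim ψ ρ ≤ ψ ρ - φ ρ :=
    le_of_tendsto (hψ.tendsto_leftLim_of_pos hρ) <| by
      filter_upwards [Ioo_mem_nhdsLT hρ] with s hs using hbelow s hs.1 hs.2
  linarith [hleft ρ hρ]

end FixedPoint

theorem globally_strong_picard_psiPhi_selfclosed_general {X : Type*} [MetricSpace X]
    (R : X → X → Prop) (T : X → X)
    (hfsr : FinSemiRecurrent R T)
    (hinc : ∀ x y : X, R x y → R (T x) (T y))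
    (hcomp : AOComplete R T)
    (G : X → X → ℝ) (hG : G ∈ calG T)
    (ψ φ : ℝ → ℝ) (hpair : WeakAlteringPair ψ φ)
    (hcontr : PsiPhiContractive R T G ψ φ)
    (hasc : AlmostSelfClosed R T) :
    (∀ x : X, R x (T x) →
      ∃ z : X, T z = z ∧ Tendsto (fun n => T^[n] x) atTop (nhds z)) ∧
    (∀ z₁ z₂ : X, T z₁ = z₁ → T z₂ = z₂ → R z₁ z₂ → z₁ = z₂) := by
  have hGC2 := le_C2_of_mem_calG hG
  have hMK := hcontr.meirKeelerContractive hpair (dist_le_of_mem_calG hG)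
  refine ⟨fun x hx => ?_, fun z₁ z₂ h₁ h₂ hR => hMK.1.eq_of_fixed hGC2 h₁ h₂ hR⟩
  obtain ⟨l, hl⟩ := hMK.exists_tendsto_iterate hGC2 hfsr hinc hcomp hx
  obtain ⟨i, hi, hiR⟩ := hasc _ l (ascending_iterate hinc hx) (orbital_iterate T x) hl
  have hTu : Tendsto (fun n => T (T^[i n] x)) atTop (𝓝 l) := by
    simpa only [comp_def, iterate_succ_apply'] using (hl.comp (tendsto_add_atTop_nat 1)).comp hi
  refine ⟨l, ?_, hl⟩
  rcases le_C1_or_A3_le_of_mem_calG hG with hC1 | hA3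
  · exact hMK.1.fixed_of_tendsto hC1 (hl.comp hi) hTu hiR
  · exact hcontr.fixed_of_tendsto hpair hGC2 hA3 (hl.comp hi) hTu hiR

/-- main theorem, alternative (iv): `T` `(d,R;G,(ψ,φ))`-contractive for a
pair of weak generalized altering functions, `X` `(a-o,d)`-complete,
`R` `(a-o,d)`-almost-selfclosed. -/
theorem globally_strong_picard_psiPhi_selfclosed {X : Type*} [MetricSpace X]
    (R : X → X → Prop) (T : X → X)
    (hni : ∃ x y : X, R x y ∧ x ≠ y)
    (hfsr : FinSemiRecurrent R T)
    (hsp : ∃ x : X, R x (T x))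
    (hinc : ∀ x y : X, R x y → R (T x) (T y))
    (hcomp : AOComplete R T)
    (G : X → X → ℝ) (hG : G ∈ calG T)
    (ψ φ : ℝ → ℝ) (hpair : WeakAlteringPair ψ φ)
    (hcontr : PsiPhiContractive R T G ψ φ)
    (hasc : AlmostSelfClosed R T) :
    (∀ x : X, R x (T x) →
      ∃ z : X, T z = z ∧ Tendsto (fun n => T^[n] x) atTop (nhds z)) ∧
    (∀ z₁ z₂ : X, T z₁ = z₁ → T z₂ = z₂ → R z₁ z₂ → z₁ = z₂) :=
  globally_strong_picard_psiPhi_selfclosed_general R T hfsr hinc hcomp G hG ψ φ hpair hcontr hasc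

end Paper
end
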